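/- Sharp Zygmund inequality on the square torus: let λ > 0 and let (a_m)_{m ∈ S_λ} be complex numbers, where S_λ := {m ∈ ℤ² : |m|² = λ}. Set u(x) := Σ_{m ∈ S_λ} a_m e^{2πi m·x}. Then ∫_{[0,1]²} |u(x)|⁴ dx ≤ 3 ( Σ_{m ∈ S_λ} |a_m|² )². -/

import Mathlib

/-
Expanding `u²`, Parseval gives `∫ |u|⁴ = ∫ |u²|² = ∑_ξ |c_ξ|²` with `c_ξ = ∑_{m + n = ξ} a_m a_n`.
Points `m, n` of a circle centred at `0` are determined up to order by their sum `ξ ≠ 0`: viewed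
in `ℂ` they are the roots of `z² - ξ z + r² ξ / conj ξ`. So for `ξ ≠ 0` the sum defining `c_ξ`
has at most two terms, and Cauchy–Schwarz gives `|c_ξ|² ≤ 2 ∑_{m + n = ξ} |a_m|² |a_n|²`, which
sums over `ξ` to at most `2 (∑ |a_m|²)²`. The remaining term `|c_0|²` is at most `(∑ |a_m|²)²`,
again by Cauchy–Schwarz.
-/

open MeasureTheory Real

noncomputable section

open Finset
open scoped ComplexConjugate Pointwise

theorem Complex.eq_and_eq_or_eq_and_eq_of_add_eq_of_normSq_eq {z w u v : ℂ}
    (hw : normSq w = normSq z) (hu : normSq u = normSq z) (hv : normSq v = normSq z)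
    (hsum : u + v = z + w) (hne : z + w ≠ 0) : (u = z ∧ v = w) ∨ (u = w ∧ v = z) := by
  -- on a circle of radius `r`, `z w conj (z + w) = r² (z + w)`, so the sum determines the product
  have hprod : ∀ x y : ℂ, normSq x = normSq z → normSq y = normSq z →
      x * y * conj (x + y) = normSq z * (x + y) := by
    intro x y hx hy
    have hx' : x * conj x = normSq z := by rw [Complex.mul_conj, hx]
    have hy' : y * conj y = normSq z := by rw [Complex.mul_conj, hy]
    rw [map_add]; linear_combination y * hx' + x * hy'
  have hmul : u * v = z * w := by
    have h := (hprod u v hu hv).trans (hsum ▸ (hprod z w rfl hw).symm)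
    rwa [hsum, mul_left_inj' ((map_ne_zero _).2 hne)] at h
  have hroots : (u - z) * (u - w) = 0 := by linear_combination u * hsum - hmul
  rcases mul_eq_zero.1 hroots with h | h
  · exact .inl ⟨by linear_combination h, by linear_combination hsum - h⟩
  · exact .inr ⟨by linear_combination h, by linear_combination hsum - h⟩

namespace SquareTorus

def fourierMode (k : ℤ × ℤ) (x : ℝ × ℝ) : ℂ :=
  Complex.exp (2 * (π : ℂ) * Complex.I * ((k.1 : ℂ) * (x.1 : ℂ) + (k.2 : ℂ) * (x.2 : ℂ)))

lemma continuous_fourierMode (k : ℤ × ℤ) : Continuous (fourierMode k) := by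
  unfold fourierMode; fun_prop

lemma fourierMode_add (k l : ℤ × ℤ) (x : ℝ × ℝ) :
    fourierMode (k + l) x = fourierMode k x * fourierMode l x := by
  simp only [fourierMode, ← Complex.exp_add, Prod.fst_add, Prod.snd_add]
  push_cast; ring_nf

lemma conj_fourierMode (k : ℤ × ℤ) (x : ℝ × ℝ) : conj (fourierMode k x) = fourierMode (-k) x := by
  simp only [fourierMode, ← Complex.exp_conj, map_mul, map_add, map_ofNat, Complex.conj_I,
    Complex.conj_ofReal, map_intCast, Prod.fst_neg, Prod.snd_neg]
  push_cast; ring_nf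

lemma integral_exp_two_pi_I_int_mul (k : ℤ) :
    ∫ t in Set.Icc (0 : ℝ) 1, Complex.exp (2 * π * Complex.I * k * t) = if k = 0 then 1 else 0 := by
  rw [integral_Icc_eq_integral_Ioc, ← intervalIntegral.integral_of_le zero_le_one]
  split_ifs with hk
  · simp [hk]
  · have hc : 2 * π * Complex.I * k ≠ 0 := by simp [Real.pi_ne_zero, Complex.I_ne_zero, hk]
    rw [integral_exp_mul_complex hc]
    have hper : Complex.exp (2 * π * Complex.I * k) = 1 := by
      rw [← Complex.exp_int_mul_two_pi_mul_I k]; ring_nf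
    simp [hper]

lemma integral_fourierMode (k : ℤ × ℤ) :
    ∫ x in Set.Icc (0 : ℝ) 1 ×ˢ Set.Icc (0 : ℝ) 1, fourierMode k x = if k = 0 then 1 else 0 := by
  let e : ℤ → ℝ → ℂ := fun j t ↦ Complex.exp (2 * π * Complex.I * j * t)
  have hsplit : fourierMode k = fun x ↦ e k.1 x.1 * e k.2 x.2 := by
    ext x; rw [fourierMode, ← Complex.exp_add]; ring_nf
  rw [hsplit, Measure.volume_eq_prod, setIntegral_prod_mul (e k.1) (e k.2),
    integral_exp_two_pi_I_int_mul, integral_exp_two_pi_I_int_mul]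
  simp only [Prod.ext_iff, Prod.fst_zero, Prod.snd_zero, ite_zero_mul_ite_zero, one_mul]

lemma integral_norm_sq_sum_fourierMode (T : Finset (ℤ × ℤ)) (c : ℤ × ℤ → ℂ) :
    ∫ x in Set.Icc (0 : ℝ) 1 ×ˢ Set.Icc (0 : ℝ) 1, ‖∑ k ∈ T, c k * fourierMode k x‖ ^ 2 =
      ∑ k ∈ T, ‖c k‖ ^ 2 := by
  have hexpand : ∀ x, ((‖∑ k ∈ T, c k * fourierMode k x‖ ^ 2 : ℝ) : ℂ) =
      ∑ k ∈ T, ∑ l ∈ T, c k * conj (c l) * fourierMode (k - l) x := by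
    intro x
    push_cast
    rw [← Complex.mul_conj', map_sum, sum_mul_sum]
    refine sum_congr rfl fun k _ ↦ sum_congr rfl fun l _ ↦ ?_
    rw [map_mul, conj_fourierMode, sub_eq_add_neg, fourierMode_add]; ring
  have hint : ∀ k l : ℤ × ℤ, Integrable (fun x ↦ c k * conj (c l) * fourierMode (k - l) x)
      (volume.restrict (Set.Icc (0 : ℝ) 1 ×ˢ Set.Icc (0 : ℝ) 1)) := fun k l ↦
    ((continuous_fourierMode _).const_mul _).continuousOn.integrableOn_compact
      (isCompact_Icc.prod isCompact_Icc)
  apply Complex.ofReal_injective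
  rw [← integral_complex_ofReal]
  simp_rw [hexpand]
  rw [integral_finsetSum _ fun k _ ↦ integrable_finsetSum _ fun l _ ↦ hint k l]
  push_cast
  refine sum_congr rfl fun k _ ↦ ?_
  rw [integral_finsetSum _ fun l _ ↦ hint k l]
  simp_rw [integral_const_mul, integral_fourierMode, sub_eq_zero, mul_ite, mul_one, mul_zero,
    sum_ite_eq, if_pos ‹k ∈ T›, Complex.mul_conj']

section SelfConvolution

variable {G : Type*} [AddCommGroup G] [DecidableEq G] (S : Finset G) (a : G → ℂ)

def selfConvolution (ξ : G) : ℂ :=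
  ∑ p ∈ S ×ˢ S with p.1 + p.2 = ξ, a p.1 * a p.2

lemma norm_selfConvolution_sq_le_card_mul (ξ : G) :
    ‖selfConvolution S a ξ‖ ^ 2 ≤
      #{p ∈ S ×ˢ S | p.1 + p.2 = ξ} * ∑ p ∈ S ×ˢ S with p.1 + p.2 = ξ, ‖a p.1‖ ^ 2 * ‖a p.2‖ ^ 2 :=
  calc ‖selfConvolution S a ξ‖ ^ 2
      ≤ (∑ p ∈ S ×ˢ S with p.1 + p.2 = ξ, ‖a p.1‖ * ‖a p.2‖) ^ 2 := by
        gcongr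
        exact (norm_sum_le _ _).trans_eq (by simp only [norm_mul])
    _ ≤ _ := by
      simpa only [mul_pow] using sq_sum_le_card_mul_sum_sq (s := {p ∈ S ×ˢ S | p.1 + p.2 = ξ})
        (f := fun p ↦ ‖a p.1‖ * ‖a p.2‖)

lemma sum_filter_add_eq_fst_le {f : G → ℝ} (hf : ∀ m, 0 ≤ f m) (ξ : G) :
    ∑ p ∈ S ×ˢ S with p.1 + p.2 = ξ, f p.1 ≤ ∑ m ∈ S, f m := by
  have hinj :
      Set.InjOn (Prod.fst : G × G → G) ↑({p ∈ S ×ˢ S | p.1 + p.2 = ξ} : Finset (G × G)) := by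
    intro p hp q hq h
    simp only [mem_coe, mem_filter] at hp hq
    ext
    · exact h
    · rw [eq_sub_of_add_eq' hp.2, eq_sub_of_add_eq' hq.2, h]
  rw [← sum_image hinj]
  refine sum_le_sum_of_subset_of_nonneg (fun m hm ↦ ?_) fun m _ _ ↦ hf m
  obtain ⟨p, hp, rfl⟩ := mem_image.1 hm
  exact (mem_product.1 (mem_filter.1 hp).1).1

lemma sum_filter_add_eq_snd_le {f : G → ℝ} (hf : ∀ m, 0 ≤ f m) (ξ : G) :
    ∑ p ∈ S ×ˢ S with p.1 + p.2 = ξ, f p.2 ≤ ∑ m ∈ S, f m := by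
  have hswap : ∀ p ∈ ({p ∈ S ×ˢ S | p.1 + p.2 = ξ} : Finset (G × G)),
      p.swap ∈ ({p ∈ S ×ˢ S | p.1 + p.2 = ξ} : Finset (G × G)) := fun p hp ↦ by
    simp only [mem_filter, mem_product, Prod.fst_swap, Prod.snd_swap] at hp ⊢
    exact ⟨hp.1.symm, add_comm p.2 p.1 ▸ hp.2⟩
  calc ∑ p ∈ S ×ˢ S with p.1 + p.2 = ξ, f p.2
      = ∑ p ∈ S ×ˢ S with p.1 + p.2 = ξ, f p.1 :=
        sum_nbij' Prod.swap Prod.swap hswap hswap (fun _ _ ↦ rfl) (fun _ _ ↦ rfl) (fun _ _ ↦ rfl)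
    _ ≤ ∑ m ∈ S, f m := sum_filter_add_eq_fst_le S hf ξ

lemma norm_selfConvolution_le (ξ : G) : ‖selfConvolution S a ξ‖ ≤ ∑ m ∈ S, ‖a m‖ ^ 2 := by
  have hCS := sum_mul_sq_le_sq_mul_sq {p ∈ S ×ˢ S | p.1 + p.2 = ξ} (fun p ↦ ‖a p.1‖)
    (fun p ↦ ‖a p.2‖)
  have hfst := sum_filter_add_eq_fst_le S (fun m ↦ sq_nonneg ‖a m‖) ξ
  have hsnd := sum_filter_add_eq_snd_le S (fun m ↦ sq_nonneg ‖a m‖) ξ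
  refine (norm_sum_le _ _).trans (abs_le_of_sq_le_sq' ?_ (by positivity)).2
  calc (∑ p ∈ S ×ˢ S with p.1 + p.2 = ξ, ‖a p.1 * a p.2‖) ^ 2
      ≤ (∑ p ∈ S ×ˢ S with p.1 + p.2 = ξ, ‖a p.1‖ ^ 2) *
          ∑ p ∈ S ×ˢ S with p.1 + p.2 = ξ, ‖a p.2‖ ^ 2 := by simpa only [norm_mul] using hCS
    _ ≤ (∑ m ∈ S, ‖a m‖ ^ 2) ^ 2 := by
      rw [sq]; gcongr

end SelfConvolution

lemma sq_sum_fourierMode (S : Finset (ℤ × ℤ)) (a : ℤ × ℤ → ℂ) (x : ℝ × ℝ) :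
    (∑ m ∈ S, a m * fourierMode m x) ^ 2 =
      ∑ ξ ∈ S + S, selfConvolution S a ξ * fourierMode ξ x :=
  calc (∑ m ∈ S, a m * fourierMode m x) ^ 2
      = ∑ p ∈ S ×ˢ S, a p.1 * a p.2 * fourierMode (p.1 + p.2) x := by
        rw [sq, sum_mul_sum, sum_product]
        exact sum_congr rfl fun m _ ↦ sum_congr rfl fun n _ ↦ by rw [fourierMode_add]; ring
    _ = ∑ ξ ∈ S + S, ∑ p ∈ S ×ˢ S with p.1 + p.2 = ξ, a p.1 * a p.2 * fourierMode ξ x := by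
        rw [← sum_fiberwise_of_maps_to fun p hp ↦
          add_mem_add (mem_product.1 hp).1 (mem_product.1 hp).2]
        exact sum_congr rfl fun ξ _ ↦ sum_congr rfl fun p hp ↦ by rw [(mem_filter.1 hp).2]
    _ = _ := by simp_rw [selfConvolution, sum_mul]

lemma eq_or_eq_swap_of_add_eq_of_mem_circle {r : ℝ} {m n p q : ℤ × ℤ}
    (hm : (m.1 : ℝ) ^ 2 + (m.2 : ℝ) ^ 2 = r) (hn : (n.1 : ℝ) ^ 2 + (n.2 : ℝ) ^ 2 = r)
    (hp : (p.1 : ℝ) ^ 2 + (p.2 : ℝ) ^ 2 = r) (hq : (q.1 : ℝ) ^ 2 + (q.2 : ℝ) ^ 2 = r)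
    (hsum : p + q = m + n) (hne : m + n ≠ 0) : (p, q) = (m, n) ∨ (p, q) = (n, m) := by
  let ι : ℤ × ℤ →+ ℂ :=
    { toFun := fun k ↦ (k.1 : ℝ) + (k.2 : ℝ) * Complex.I
      map_zero' := by simp
      map_add' := fun k l ↦ by simp only [Prod.fst_add, Prod.snd_add]; push_cast; ring }
  have hι : Function.Injective ι := fun k l h ↦ by
    simpa [ι, Complex.ext_iff, Prod.ext_iff] using h
  have hnormSq : ∀ k : ℤ × ℤ, Complex.normSq (ι k) = (k.1 : ℝ) ^ 2 + (k.2 : ℝ) ^ 2 :=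
    fun k ↦ Complex.normSq_add_mul_I _ _
  have := Complex.eq_and_eq_or_eq_and_eq_of_add_eq_of_normSq_eq (z := ι m) (w := ι n) (u := ι p)
    (v := ι q) (by rw [hnormSq, hnormSq, hm, hn]) (by rw [hnormSq, hnormSq, hm, hp])
    (by rw [hnormSq, hnormSq, hm, hq]) (by rw [← map_add, ← map_add, hsum])
    (by rwa [← map_add, map_ne_zero_iff _ hι])
  simpa only [Prod.ext_iff, hι.eq_iff] using this

lemma card_filter_add_eq_le_two {r : ℝ} {S : Finset (ℤ × ℤ)}
    (hS : ∀ m ∈ S, (m.1 : ℝ) ^ 2 + (m.2 : ℝ) ^ 2 = r) {ξ : ℤ × ℤ} (hξ : ξ ≠ 0) :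
    #{p ∈ S ×ˢ S | p.1 + p.2 = ξ} ≤ 2 := by
  obtain hempty | ⟨⟨m, n⟩, hmn⟩ := eq_empty_or_nonempty {p ∈ S ×ˢ S | p.1 + p.2 = ξ}
  · simp [hempty]
  simp only [mem_filter, mem_product] at hmn
  obtain ⟨⟨hm, hn⟩, rfl⟩ := hmn
  calc #{p ∈ S ×ˢ S | p.1 + p.2 = m + n}
      ≤ #{(m, n), (n, m)} := card_le_card fun p hp ↦ by
        simp only [mem_filter, mem_product] at hp
        simpa using eq_or_eq_swap_of_add_eq_of_mem_circle (hS m hm) (hS n hn) (hS _ hp.1.1)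
          (hS _ hp.1.2) hp.2 hξ
    _ ≤ 2 := card_le_two

lemma sum_norm_selfConvolution_sq_le {r : ℝ} {S : Finset (ℤ × ℤ)}
    (hS : ∀ m ∈ S, (m.1 : ℝ) ^ 2 + (m.2 : ℝ) ^ 2 = r) (a : ℤ × ℤ → ℂ) :
    ∑ ξ ∈ S + S, ‖selfConvolution S a ξ‖ ^ 2 ≤ 3 * (∑ m ∈ S, ‖a m‖ ^ 2) ^ 2 := by
  set Q := ∑ m ∈ S, ‖a m‖ ^ 2
  set w : (ℤ × ℤ) × (ℤ × ℤ) → ℝ := fun p ↦ ‖a p.1‖ ^ 2 * ‖a p.2‖ ^ 2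
  have hpoint : ∀ ξ, ‖selfConvolution S a ξ‖ ^ 2 ≤
      2 * ∑ p ∈ S ×ˢ S with p.1 + p.2 = ξ, w p + if ξ = 0 then Q ^ 2 else 0 := by
    intro ξ
    have hw : 0 ≤ ∑ p ∈ S ×ˢ S with p.1 + p.2 = ξ, w p := sum_nonneg fun p _ ↦ by positivity
    split_ifs with hξ
    · have := pow_le_pow_left₀ (norm_nonneg _) (norm_selfConvolution_le S a ξ) 2
      linarith
    · rw [add_zero]
      refine (norm_selfConvolution_sq_le_card_mul S a ξ).trans (mul_le_mul_of_nonneg_right ?_ hw)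
      exact_mod_cast card_filter_add_eq_le_two hS hξ
  have hfibers : ∑ ξ ∈ S + S, ∑ p ∈ S ×ˢ S with p.1 + p.2 = ξ, w p = Q ^ 2 := by
    rw [sum_fiberwise_of_maps_to fun p hp ↦
      add_mem_add (mem_product.1 hp).1 (mem_product.1 hp).2, sum_product, sq, sum_mul_sum]
  calc ∑ ξ ∈ S + S, ‖selfConvolution S a ξ‖ ^ 2
      ≤ ∑ ξ ∈ S + S, (2 * ∑ p ∈ S ×ˢ S with p.1 + p.2 = ξ, w p + if ξ = 0 then Q ^ 2 else 0) :=
        sum_le_sum fun ξ _ ↦ hpoint ξ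
    _ = 2 * Q ^ 2 + if (0 : ℤ × ℤ) ∈ S + S then Q ^ 2 else 0 := by
        rw [sum_add_distrib, ← mul_sum, hfibers, sum_ite_eq']
    _ ≤ 3 * Q ^ 2 := by split_ifs <;> nlinarith [sq_nonneg Q]

end SquareTorus

open SquareTorus

theorem zygmund_inequality_square_torus
    (lam : ℝ) (S : Finset (ℤ × ℤ))
    (hS : ∀ m : ℤ × ℤ, m ∈ S ↔ ((m.1 : ℝ) ^ 2 + (m.2 : ℝ) ^ 2 = lam))
    (a : ℤ × ℤ → ℂ) :
    (∫ x in Set.Icc (0 : ℝ) 1 ×ˢ Set.Icc (0 : ℝ) 1,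
        ‖∑ m ∈ S, a m *
          Complex.exp (2 * (Real.pi : ℂ) * Complex.I *
            ((m.1 : ℂ) * (x.1 : ℂ) + (m.2 : ℂ) * (x.2 : ℂ)))‖ ^ 4) ≤
      3 * (∑ m ∈ S, ‖a m‖ ^ 2) ^ 2 :=
  calc ∫ x in Set.Icc (0 : ℝ) 1 ×ˢ Set.Icc (0 : ℝ) 1, ‖∑ m ∈ S, a m * fourierMode m x‖ ^ 4
      = ∫ x in Set.Icc (0 : ℝ) 1 ×ˢ Set.Icc (0 : ℝ) 1,
          ‖∑ ξ ∈ S + S, selfConvolution S a ξ * fourierMode ξ x‖ ^ 2 := by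
        simp_rw [← sq_sum_fourierMode, norm_pow, ← pow_mul]
    _ = ∑ ξ ∈ S + S, ‖selfConvolution S a ξ‖ ^ 2 := integral_norm_sq_sum_fourierMode _ _
    _ ≤ 3 * (∑ m ∈ S, ‖a m‖ ^ 2) ^ 2 :=
        sum_norm_selfConvolution_sq_le (fun m hm ↦ (hS m).1 hm) a
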